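/- Suppose the grade m is even, m ≥ 2. Then for every real inner product space and every family of vectors (V_w), ⟨(id−E)∘(id−S), (id−E)∘J^{⋆m}⟩ = 0, where the inner product is taken over the words of length m. (This is the vanishing of the linear perturbation term which makes the sinhlog integrator optimal at odd strong orders n = m−1.) -/

import Mathlib

open Finsupp

/-- Words over the alphabet `A = {0,1,…,d}`. -/
abbrev Word (d : ℕ) : Type := List (Fin (d+1))

/-- The free real vector space with basis the set of all words. -/
abbrev KA (d : ℕ) : Type := Word d →₀ ℝ

/-- Shuffle product of two words, as an element of `KA d`. -/
noncomputable def shuffleWord (d : ℕ) : Word d → Word d → KA d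
  | [], v => Finsupp.single v 1
  | a :: u, [] => Finsupp.single (a :: u) 1
  | a :: u, b :: v =>
      Finsupp.mapDomain (List.cons a) (shuffleWord d u (b :: v)) +
      Finsupp.mapDomain (List.cons b) (shuffleWord d (a :: u) v)
  termination_by u v => u.length + v.length

/-- Bilinear extension of the shuffle product to `KA d`. -/
noncomputable def sh (d : ℕ) (x y : KA d) : KA d :=
  x.sum fun u cu => y.sum fun v cv => (cu * cv) • shuffleWord d u v

/-- Admissible words: concatenations of blocks each of which is the single
letter `0` or a pair `aa` with `a ≠ 0`. -/
inductive Admissible (d : ℕ) : Word d → Prop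
  | nil : Admissible d []
  | zero {w : Word d} : Admissible d w → Admissible d (0 :: w)
  | pair {w : Word d} (a : Fin (d+1)) : a ≠ 0 → Admissible d w →
      Admissible d (a :: a :: w)

/-- Number of `0` letters. -/
def zc (d : ℕ) (w : Word d) : ℕ := w.count 0

/-- Half the number of nonzero letters. -/
def dc (d : ℕ) (w : Word d) : ℕ := (w.length - w.count 0) / 2

def nc (d : ℕ) (w : Word d) : ℕ := zc d w + dc d w

open Classical in
/-- The expectation map on words. -/
noncomputable def Ebar (d : ℕ) (t : ℝ) (w : Word d) : ℝ :=
  if Admissible d w then t ^ nc d w / (2 ^ dc d w * Nat.factorial (nc d w)) else 0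

/-- Linear extension of the expectation map to `KA d`. -/
noncomputable def EbarL (d : ℕ) (t : ℝ) (x : KA d) : ℝ :=
  x.sum fun w c => c * Ebar d t w

/-- The linear endomorphism of `KA d` determined by values on basis words. -/
noncomputable def wordLift (d : ℕ) (f : Word d → KA d) : KA d →ₗ[ℝ] KA d :=
  Finsupp.lsum ℝ fun w => LinearMap.toSpanSingleton ℝ (KA d) (f w)

/-- The identity endomorphism `id`. -/
noncomputable def idE (d : ℕ) : KA d →ₗ[ℝ] KA d := LinearMap.id

/-- The reversal endomorphism `|S|`. -/
noncomputable def revE (d : ℕ) : KA d →ₗ[ℝ] KA d :=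
  wordLift d fun w => Finsupp.single w.reverse 1

/-- The antipode `S`. -/
noncomputable def Sa (d : ℕ) : KA d →ₗ[ℝ] KA d :=
  wordLift d fun w => Finsupp.single w.reverse ((-1 : ℝ) ^ w.length)

/-- The convolution unit `ν`. -/
noncomputable def nuE (d : ℕ) : KA d →ₗ[ℝ] KA d :=
  wordLift d fun w => if w = [] then Finsupp.single ([] : Word d) 1 else 0

/-- The expectation endomorphism `E`. -/
noncomputable def EE (d : ℕ) (t : ℝ) : KA d →ₗ[ℝ] KA d :=
  wordLift d fun w => Finsupp.single ([] : Word d) (Ebar d t w)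

/-- The convolution product `X ⋆ Y`. -/
noncomputable def conv (d : ℕ) (X Y : KA d →ₗ[ℝ] KA d) : KA d →ₗ[ℝ] KA d :=
  wordLift d fun w => ∑ k ∈ Finset.range (w.length + 1),
    sh d (X (Finsupp.single (w.take k) 1)) (Y (Finsupp.single (w.drop k) 1))

/-- Convolution powers, `X^{⋆0} = ν`. -/
noncomputable def convPow (d : ℕ) (X : KA d →ₗ[ℝ] KA d) : ℕ → (KA d →ₗ[ℝ] KA d)
  | 0 => nuE d
  | k + 1 => conv d X (convPow d X k)

/-- The inner product `⟨X,Y⟩` of endomorphisms, taken over the words of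
length `n`, relative to the family of vectors `Vf`. -/
noncomputable def ip (d : ℕ) (t : ℝ) {H : Type*} [NormedAddCommGroup H]
    [InnerProductSpace ℝ H] (Vf : Word d → H) (n : ℕ)
    (X Y : KA d →ₗ[ℝ] KA d) : ℝ :=
  ∑ u : Fin n → Fin (d+1), ∑ v : Fin n → Fin (d+1),
    EbarL d t (sh d (X (Finsupp.single (List.ofFn u) 1))
                    (Y (Finsupp.single (List.ofFn v) 1))) *
      (inner ℝ (Vf (List.ofFn u)) (Vf (List.ofFn v)) : ℝ)

/-- Positive semidefiniteness of the expectation Gram matrix at grade `n`: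
indexed by the words of length `n` together with the empty word. -/
def gramPSD (d n : ℕ) (t : ℝ) : Prop :=
  ∀ c : Option (Fin n → Fin (d+1)) → ℝ,
    0 ≤ ∑ x : Option (Fin n → Fin (d+1)), ∑ y : Option (Fin n → Fin (d+1)),
      c x * c y *
        EbarL d t (shuffleWord d (x.elim ([] : Word d) List.ofFn)
                                 (y.elim ([] : Word d) List.ofFn))

/-! For a word `u` of even length the antipode acts as reversal `|S|`, and `Ē` is
reversal-invariant, so `(id − E)(id − S) u = u − |S| u`. For a word `v` of length `m`,
`J^{⋆m} v` is the shuffle of the letters of `v`; it is fixed by reversal, and so is its image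
under `id − E`. Since reversal is an automorphism of the shuffle product preserving `Ē`,
`Ē((u − |S| u) ⧢ z) = 0` for every reversal-invariant `z`. -/

section Shuffle

variable {d : ℕ}

@[simp]
lemma shuffleWord_nil_left (v : Word d) : shuffleWord d [] v = single v 1 := by
  rw [shuffleWord]

@[simp]
lemma shuffleWord_nil_right (u : Word d) : shuffleWord d u [] = single u 1 := by
  cases u <;> rw [shuffleWord]

lemma shuffleWord_cons_cons (a b : Fin (d+1)) (u v : Word d) :
    shuffleWord d (a :: u) (b :: v) =
      mapDomain (List.cons a) (shuffleWord d u (b :: v)) +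
      mapDomain (List.cons b) (shuffleWord d (a :: u) v) := by
  rw [shuffleWord]

lemma mapDomain_append_mapDomain_cons (s : Word d) (a : Fin (d+1)) (x : KA d) :
    mapDomain (· ++ s) (mapDomain (List.cons a) x) =
      mapDomain (List.cons a) (mapDomain (· ++ s) x) := by
  simp only [← mapDomain_comp]
  rfl

theorem shuffleWord_append_singleton (p q : Word d) (a b : Fin (d+1)) :
    shuffleWord d (p ++ [a]) (q ++ [b]) =
      mapDomain (· ++ [a]) (shuffleWord d p (q ++ [b])) +
      mapDomain (· ++ [b]) (shuffleWord d (p ++ [a]) q) := by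
  match p, q with
  | [], [] => simp [shuffleWord_cons_cons, add_comm]
  | [], e :: q =>
      have ih := shuffleWord_append_singleton [] q a b
      simp only [List.nil_append] at ih
      simp only [List.nil_append, List.cons_append, shuffleWord_cons_cons, ih, mapDomain_add,
        shuffleWord_nil_left, mapDomain_single, mapDomain_append_mapDomain_cons]
      abel
  | c :: p, [] =>
      have ih := shuffleWord_append_singleton p [] a b
      simp only [List.nil_append] at ih
      simp only [List.nil_append, List.cons_append, shuffleWord_cons_cons, ih, mapDomain_add,
        shuffleWord_nil_right, mapDomain_single, mapDomain_append_mapDomain_cons]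
      abel
  | c :: p, e :: q =>
      have ih₁ := shuffleWord_append_singleton p (e :: q) a b
      have ih₂ := shuffleWord_append_singleton (c :: p) q a b
      simp only [List.cons_append] at ih₁ ih₂
      simp only [List.cons_append, shuffleWord_cons_cons, ih₁, ih₂, mapDomain_add,
        mapDomain_append_mapDomain_cons]
      abel
  termination_by p.length + q.length

theorem mapDomain_reverse_shuffleWord (u v : Word d) :
    mapDomain List.reverse (shuffleWord d u v) = shuffleWord d u.reverse v.reverse := by
  match u, v with
  | [], v => simp
  | a :: u, [] => simp
  | a :: u, b :: v =>
      have reverse_cons (c : Fin (d+1)) :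
          List.reverse ∘ List.cons c = (· ++ [c]) ∘ (List.reverse : Word d → Word d) := by
        funext l; simp
      rw [shuffleWord_cons_cons, mapDomain_add, ← mapDomain_comp, ← mapDomain_comp,
        reverse_cons, reverse_cons, mapDomain_comp, mapDomain_comp,
        mapDomain_reverse_shuffleWord u (b :: v), mapDomain_reverse_shuffleWord (a :: u) v,
        List.reverse_cons, List.reverse_cons, shuffleWord_append_singleton]
  termination_by u.length + v.length

noncomputable def shuffleBilin (d : ℕ) : KA d →ₗ[ℝ] KA d →ₗ[ℝ] KA d :=
  linearCombination ℝ fun u => linearCombination ℝ fun v => shuffleWord d u v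

lemma sh_eq_shuffleBilin (x y : KA d) : sh d x y = shuffleBilin d x y := by
  simp only [sh, shuffleBilin, linearCombination_apply, Finsupp.sum, LinearMap.sum_apply,
    LinearMap.smul_apply, Finset.smul_sum, smul_smul]

lemma sh_single_single (u v : Word d) (c e : ℝ) :
    sh d (single u c) (single v e) = (c * e) • shuffleWord d u v := by
  rw [sh, sum_single_index (by simp), sum_single_index (by simp)]

@[simp] lemma sh_zero_left (y : KA d) : sh d 0 y = 0 := by simp [sh_eq_shuffleBilin]

@[simp] lemma sh_zero_right (x : KA d) : sh d x 0 = 0 := by simp [sh_eq_shuffleBilin]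

lemma sh_sub_left (x x' y : KA d) : sh d (x - x') y = sh d x y - sh d x' y := by
  simp [sh_eq_shuffleBilin]

lemma revE_eq_lmapDomain : revE d = lmapDomain ℝ ℝ List.reverse := by
  ext w : 2
  simp [revE, wordLift]

lemma revE_single (w : Word d) (c : ℝ) : revE d (single w c) = single w.reverse c := by
  simp [revE_eq_lmapDomain]

lemma revE_sh (x y : KA d) : revE d (sh d x y) = sh d (revE d x) (revE d y) := by
  simp only [sh_eq_shuffleBilin]
  induction x using Finsupp.induction_linear with
  | zero => simp
  | add a b ha hb => simp [ha, hb]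
  | single u c =>
    induction y using Finsupp.induction_linear with
    | zero => simp
    | add a b ha hb => simp [ha, hb]
    | single v e =>
      rw [← sh_eq_shuffleBilin, ← sh_eq_shuffleBilin, revE_single, revE_single,
        sh_single_single, sh_single_single, map_smul, revE_eq_lmapDomain, lmapDomain_apply,
        mapDomain_reverse_shuffleWord]

end Shuffle

section Expectation

variable {d : ℕ}

lemma Admissible.append_zero {w : Word d} (h : Admissible d w) : Admissible d (w ++ [0]) := by
  induction h with
  | nil => exact .zero .nil
  | zero _ ih => exact .zero ih
  | pair a ha _ ih => exact .pair a ha ih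

lemma Admissible.append_pair {w : Word d} (h : Admissible d w) {a : Fin (d+1)} (ha : a ≠ 0) :
    Admissible d (w ++ [a, a]) := by
  induction h with
  | nil => exact .pair a ha .nil
  | zero _ ih => exact .zero ih
  | pair b hb _ ih => exact .pair b hb ih

lemma Admissible.reverse {w : Word d} (h : Admissible d w) : Admissible d w.reverse := by
  induction h with
  | nil => exact .nil
  | zero _ ih => simpa using ih.append_zero
  | pair a ha _ ih => simpa using ih.append_pair ha

lemma admissible_reverse_iff {w : Word d} : Admissible d w.reverse ↔ Admissible d w :=
  ⟨fun h => by simpa using h.reverse, Admissible.reverse⟩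

variable (t : ℝ)

lemma Ebar_reverse (w : Word d) : Ebar d t w.reverse = Ebar d t w := by
  simp only [Ebar, nc, zc, dc, List.count_reverse, List.length_reverse]
  congr 1
  exact propext admissible_reverse_iff

lemma EbarL_eq_linearCombination (x : KA d) : EbarL d t x = linearCombination ℝ (Ebar d t) x :=
  rfl

lemma EbarL_sub (x y : KA d) : EbarL d t (x - y) = EbarL d t x - EbarL d t y := by
  simp only [EbarL_eq_linearCombination, map_sub]

lemma EbarL_revE (x : KA d) : EbarL d t (revE d x) = EbarL d t x := by
  simp only [EbarL_eq_linearCombination, revE_eq_lmapDomain, lmapDomain_apply,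
    linearCombination_mapDomain, Function.comp_def, Ebar_reverse]

lemma EE_apply (x : KA d) : EE d t x = single [] (EbarL d t x) := by
  induction x using Finsupp.induction_linear with
  | zero => simp [EbarL_eq_linearCombination]
  | add x y hx hy => simp [hx, hy, EbarL_eq_linearCombination]
  | single w c => simp [EE, wordLift, EbarL_eq_linearCombination]

lemma EE_revE (x : KA d) : EE d t (revE d x) = EE d t x := by
  rw [EE_apply, EE_apply, EbarL_revE]

lemma revE_EE (x : KA d) : revE d (EE d t x) = EE d t x := by
  rw [EE_apply, revE_single, List.reverse_nil]

lemma EbarL_sh_sub_revE (x : KA d) {z : KA d} (hz : revE d z = z) :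
    EbarL d t (sh d (x - revE d x) z) = 0 := by
  rw [sh_sub_left, EbarL_sub, ← hz, ← revE_sh, EbarL_revE, hz, sub_self]

end Expectation

section Convolution

variable {d : ℕ}

@[simp]
lemma idE_apply (x : KA d) : idE d x = x :=
  rfl

lemma wordLift_single (f : Word d → KA d) (w : Word d) (c : ℝ) :
    wordLift d f (single w c) = c • f w := by
  rw [wordLift, lsum_single, LinearMap.toSpanSingleton_apply]

lemma Sa_single_of_even {w : Word d} (hw : Even w.length) :
    Sa d (single w 1) = revE d (single w 1) := by
  rw [Sa, wordLift_single, one_smul, hw.neg_one_pow, revE_single]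

lemma J_single_nil : (idE d - nuE d) (single [] 1) = 0 := by
  simp [nuE, wordLift_single]

lemma J_single_of_ne_nil {w : Word d} (hw : w ≠ []) :
    (idE d - nuE d) (single w 1) = single w 1 := by
  simp [nuE, wordLift_single, hw]

lemma conv_single (X Y : KA d →ₗ[ℝ] KA d) (w : Word d) :
    conv d X Y (single w 1) = ∑ k ∈ Finset.range (w.length + 1),
      sh d (X (single (w.take k) 1)) (Y (single (w.drop k) 1)) := by
  rw [conv, wordLift_single, one_smul]

-- Each factor `J` of `J^{⋆k}` consumes at least one letter.
lemma convPow_J_single_of_length_lt {k : ℕ} {w : Word d} (hw : w.length < k) :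
    convPow d (idE d - nuE d) k (single w 1) = 0 := by
  induction k generalizing w with
  | zero => omega
  | succ k ih =>
    rw [convPow, conv_single]
    refine Finset.sum_eq_zero fun j hj => ?_
    cases j with
    | zero => rw [List.take_zero, J_single_nil, sh_zero_left]
    | succ j =>
      rw [Finset.mem_range] at hj
      rw [ih (by rw [List.length_drop]; omega), sh_zero_right]

lemma convPow_J_single_cons {k : ℕ} (a : Fin (d+1)) {w : Word d} (hw : w.length = k) :
    convPow d (idE d - nuE d) (k + 1) (single (a :: w) 1) =
      sh d (single [a] 1) (convPow d (idE d - nuE d) k (single w 1)) := by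
  rw [convPow, conv_single, Finset.sum_eq_single_of_mem 1 (by simp)]
  · rw [List.take_one, List.drop_one, J_single_of_ne_nil (by simp)]
    rfl
  · intro j hj hj1
    cases j with
    | zero => rw [List.take_zero, J_single_nil, sh_zero_left]
    | succ j =>
      rw [Finset.mem_range, List.length_cons] at hj
      rw [convPow_J_single_of_length_lt (by simp; omega), sh_zero_right]

lemma revE_convPow_J_single {k : ℕ} {w : Word d} (hw : w.length = k) :
    revE d (convPow d (idE d - nuE d) k (single w 1)) =
      convPow d (idE d - nuE d) k (single w 1) := by
  induction w generalizing k with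
  | nil =>
    subst hw
    simp [convPow, nuE, wordLift_single, revE_single]
  | cons a w ih =>
    subst hw
    rw [List.length_cons, convPow_J_single_cons a rfl, revE_sh, revE_single, ih rfl,
      List.reverse_singleton]

variable (t : ℝ)

lemma sub_EE_comp_sub_Sa_single_of_even {w : Word d} (hw : Even w.length) :
    ((idE d - EE d t) ∘ₗ (idE d - Sa d)) (single w 1) = single w 1 - revE d (single w 1) := by
  rw [LinearMap.comp_apply, LinearMap.sub_apply, LinearMap.sub_apply, idE_apply, idE_apply,
    Sa_single_of_even hw, map_sub, EE_revE, sub_self, sub_zero]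

lemma revE_sub_EE_comp_convPow_J_single {k : ℕ} {w : Word d} (hw : w.length = k) :
    revE d (((idE d - EE d t) ∘ₗ convPow d (idE d - nuE d) k) (single w 1)) =
      ((idE d - EE d t) ∘ₗ convPow d (idE d - nuE d) k) (single w 1) := by
  rw [LinearMap.comp_apply, LinearMap.sub_apply, idE_apply, map_sub, revE_EE,
    revE_convPow_J_single hw]

end Convolution

theorem stmt_4_general (d m : ℕ) (hme : Even m)
    (t : ℝ)
    {H : Type*} [NormedAddCommGroup H] [InnerProductSpace ℝ H]
    (Vf : Word d → H) :
    ip d t Vf m ((idE d - EE d t) ∘ₗ (idE d - Sa d))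
                ((idE d - EE d t) ∘ₗ convPow d (idE d - nuE d) m) = 0 := by
  refine Finset.sum_eq_zero fun u _ => Finset.sum_eq_zero fun v _ => ?_
  have hu : Even (List.ofFn u).length := by rwa [List.length_ofFn]
  rw [sub_EE_comp_sub_Sa_single_of_even t hu,
    EbarL_sh_sub_revE t _ (revE_sub_EE_comp_convPow_J_single t List.length_ofFn), zero_mul]

theorem stmt_4 (d m : ℕ) (hd : 1 ≤ d) (hm : 2 ≤ m) (hme : Even m)
    (t : ℝ) (ht : 0 < t)
    {H : Type*} [NormedAddCommGroup H] [InnerProductSpace ℝ H]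
    (Vf : Word d → H) :
    ip d t Vf m ((idE d - EE d t) ∘ₗ (idE d - Sa d))
                ((idE d - EE d t) ∘ₗ convPow d (idE d - nuE d) m) = 0 :=
  stmt_4_general d m hme t Vf
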